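/- arXiv:1909.04460 — 6 statements merged into one kernel-verified Lean document; each statement's English description precedes it below -/
import Mathlib

section
/- For every integer r ≥ 1, Σ_{j=0}^{r} (−1)^{j+1}·j·f_j(r) = μ(r), where μ is the Möbius function. -/
open Finset

lemma alt_choose (n : ℕ) :
    ∑ m ∈ range (n + 1), (-1 : ℚ) ^ m * (n.choose m : ℚ) = if n = 0 then 1 else 0 := by
  have h := Int.alternating_sum_range_choose (n := n)
  have h2 := congrArg (fun z : ℤ => (z : ℚ)) h
  push_cast at h2
  simpa using h2

lemma aux1 (n : ℕ) :
    ∑ m ∈ range (n + 1), (-1 : ℚ) ^ (m + 1) * (m : ℚ) * (n.choose m : ℚ)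
      = if n = 1 then 1 else 0 := by
  cases n with
  | zero => simp
  | succ t =>
    rw [Finset.sum_range_succ']
    simp only [Nat.cast_zero, mul_zero, zero_mul, add_zero]
    have step : ∑ k ∈ range (t + 1),
        (-1 : ℚ) ^ (k + 1 + 1) * (((k + 1 : ℕ)) : ℚ) * (((t + 1).choose (k + 1)) : ℚ)
        = ((t : ℚ) + 1) * ∑ k ∈ range (t + 1), (-1 : ℚ) ^ k * ((t.choose k) : ℚ) := by
      rw [Finset.mul_sum]
      apply Finset.sum_congr rfl
      intro k _
      have hs : (-1 : ℚ) ^ (k + 1 + 1) = (-1) ^ k := by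
        rw [pow_succ, pow_succ]; ring
      have h' : ((t + 1) * t.choose k : ℕ) = ((t + 1).choose (k + 1) * (k + 1) : ℕ) :=
        Nat.add_one_mul_choose_eq t k
      have hq : ((t : ℚ) + 1) * ((t.choose k) : ℚ)
          = (((t + 1).choose (k + 1)) : ℚ) * ((k : ℚ) + 1) := by exact_mod_cast h'
      push_cast
      rw [hs]
      rw [mul_assoc]
      rw [show ((k : ℚ) + 1) * (((t + 1).choose (k + 1)) : ℚ)
          = ((t : ℚ) + 1) * ((t.choose k) : ℚ) by rw [hq]; ring]
      ring
    rw [step, alt_choose]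
    rcases Nat.eq_zero_or_pos t with h | h
    · subst h; norm_num
    · have h1 : t + 1 ≠ 1 := by omega
      have h2 : t ≠ 0 := by omega
      simp [h1, h2]

/-- `f j (r) = (1/r) Σ_{d | gcd(r,j)} μ(d) (−1)^{j+j/d} C(r/d, j/d)` as a rational number. -/
def f (r j : ℕ) : ℚ :=
  (1 / (r : ℚ)) * ∑ d ∈ (Nat.gcd r j).divisors,
    ((ArithmeticFunction.moebius d : ℤ) : ℚ) * (-1) ^ (j + j / d) *
      ((r / d).choose (j / d) : ℚ)

/-- `Σ_{j=0}^r (−1)^{j+1} j f_j(r) = μ(r)`. -/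
theorem stmt5 (r : ℕ) (hr : 1 ≤ r) :
    ∑ j ∈ Finset.range (r + 1), (-1 : ℚ) ^ (j + 1) * (j : ℚ) * f r j =
      ((ArithmeticFunction.moebius r : ℤ) : ℚ) := by
  have hr0 : r ≠ 0 := by omega
  set g : ℕ → ℕ → ℚ := fun d j =>
    ((ArithmeticFunction.moebius d : ℤ) : ℚ) * (-1) ^ (1 + j / d) * (j : ℚ) *
      ((r / d).choose (j / d) : ℚ) with hg
  -- Step 1: rewrite each term
  have step1 : ∀ j : ℕ, (-1 : ℚ) ^ (j + 1) * (j : ℚ) * f r j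
      = (1 / (r : ℚ)) * ∑ d ∈ r.divisors.filter (· ∣ j), g d j := by
    intro j
    have hset : (Nat.gcd r j).divisors = r.divisors.filter (· ∣ j) := by
      ext d
      simp only [Nat.mem_divisors, Finset.mem_filter, Nat.dvd_gcd_iff]
      constructor
      · rintro ⟨⟨h1, h2⟩, _⟩; exact ⟨⟨h1, hr0⟩, h2⟩
      · rintro ⟨⟨h1, _⟩, h2⟩
        refine ⟨⟨h1, h2⟩, ?_⟩
        simp [Nat.gcd_eq_zero_iff, hr0]
    rw [f, hset, Finset.mul_sum, Finset.mul_sum, Finset.mul_sum]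
    apply Finset.sum_congr rfl
    intro d _
    have hsgn : (-1 : ℚ) ^ (j + 1) * (-1 : ℚ) ^ (j + j / d) = (-1 : ℚ) ^ (1 + j / d) := by
      rw [← pow_add, show j + 1 + (j + j / d) = 2 * j + (1 + j / d) by ring, pow_add,
        pow_mul]
      norm_num
    rw [hg]
    field_simp
    rw [← hsgn]
    ring
  rw [Finset.sum_congr rfl fun j _ => step1 j]
  rw [← Finset.mul_sum]
  -- Step 2: swap sums
  have step2 : ∑ j ∈ range (r + 1), ∑ d ∈ r.divisors.filter (· ∣ j), g d j
      = ∑ d ∈ r.divisors, ∑ j ∈ (range (r + 1)).filter (d ∣ ·), g d j := by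
    simp only [Finset.sum_filter]
    exact Finset.sum_comm
  rw [step2]
  -- Step 3: inner sum evaluation
  have step3 : ∀ d ∈ r.divisors,
      ∑ j ∈ (range (r + 1)).filter (d ∣ ·), g d j
        = ((ArithmeticFunction.moebius d : ℤ) : ℚ) * (d : ℚ) *
            (if r / d = 1 then 1 else 0) := by
    intro d hd
    rw [Nat.mem_divisors] at hd
    obtain ⟨hdvd, _⟩ := hd
    have hdpos : 0 < d := Nat.pos_of_dvd_of_pos hdvd (by omega)
    have hre : ∑ j ∈ (range (r + 1)).filter (d ∣ ·), g d j
        = ∑ m ∈ range (r / d + 1), g d (d * m) := by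
      apply Finset.sum_nbij' (i := fun j => j / d) (j := fun m => d * m)
      · intro a ha
        simp only [Finset.mem_filter, Finset.mem_range] at ha
        simp only [Finset.mem_range]
        have := Nat.div_le_div_right (c := d) (Nat.lt_succ_iff.mp ha.1)
        omega
      · intro m hm
        simp only [Finset.mem_range] at hm
        simp only [Finset.mem_filter, Finset.mem_range]
        constructor
        · have : d * m ≤ d * (r / d) := Nat.mul_le_mul_left d (by omega)
          rw [Nat.mul_div_cancel' hdvd] at this
          omega
        · exact Dvd.intro m rfl
      · intro a ha
        simp only [Finset.mem_filter] at ha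
        exact Nat.mul_div_cancel' ha.2
      · intro m _
        exact Nat.mul_div_cancel_left m hdpos
      · intro a ha
        simp only [Finset.mem_filter] at ha
        rw [Nat.mul_div_cancel' ha.2]
    rw [hre]
    have hterm : ∀ m, g d (d * m)
        = ((ArithmeticFunction.moebius d : ℤ) : ℚ) * (d : ℚ) *
            ((-1 : ℚ) ^ (m + 1) * (m : ℚ) * ((r / d).choose m : ℚ)) := by
      intro m
      rw [hg]
      simp only [Nat.mul_div_cancel_left m hdpos]
      push_cast
      rw [add_comm 1 m]
      ring
    rw [Finset.sum_congr rfl fun m _ => hterm m, ← Finset.mul_sum, aux1]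
  rw [Finset.sum_congr rfl step3]
  -- Step 4: only d = r survives
  have step4 : ∑ d ∈ r.divisors,
      ((ArithmeticFunction.moebius d : ℤ) : ℚ) * (d : ℚ) * (if r / d = 1 then 1 else 0)
      = ((ArithmeticFunction.moebius r : ℤ) : ℚ) * (r : ℚ) := by
    rw [Finset.sum_eq_single r]
    · simp [Nat.div_self (by omega : 0 < r)]
    · intro d hd hne
      rw [Nat.mem_divisors] at hd
      have : r / d ≠ 1 := by
        intro h1
        have := Nat.div_mul_cancel hd.1
        rw [h1, one_mul] at this
        exact hne this
      simp [this]
    · intro h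
      exact absurd (Nat.mem_divisors_self r hr0) h
  rw [step4]
  field_simp
end

section
/- Let r > 6 be an integer, let d > 1 be a divisor of r, and let 2 ≤ j < r/2; if 2j = r − 1, assume additionally that r > 9. Set A := C(r/d − 1, ⌊j/d⌋) / C(r−1, j) ∈ ℚ. Then: (a) if d = 2 and j is even, A·(r−1) ≤ 1; (b) if d = 2 and j is odd, A·(r−1) ≤ 3(r−2j)/(2(r−j)); (c) if d > 2, then A·(r−1) ≤ (r−2j)/(r−j). -/
open Finset

lemma icc_succ (n : ℕ) : Finset.Icc 1 (n+1) = insert (n+1) (Finset.Icc 1 n) := by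
  ext i; simp [Finset.mem_Icc, Finset.mem_insert]; omega

lemma key_identity (r d : ℕ) (hd : d ∣ r) (hd0 : 0 < d) :
    ∀ j, j < r → ((r - 1).choose j : ℚ) =
      ((r / d - 1).choose (j / d) : ℚ) *
        ∏ i ∈ (Finset.Icc 1 j).filter (fun i => ¬ d ∣ i), (((r : ℚ) - i) / i) := by
  intro j
  induction j with
  | zero => intro _; simp
  | succ n ih =>
    intro hlt
    have hn : n < r := Nat.lt_of_succ_lt hlt
    set Pn := ∏ i ∈ (Finset.Icc 1 n).filter (fun i => ¬ d ∣ i), (((r : ℚ) - i) / i) with hPdef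
    have IH := ih hn
    set m := r / d with hmdef
    have hm : d * m = r := Nat.mul_div_cancel' hd
    have hr0 : 0 < r := by omega
    have hm1 : 1 ≤ m := Nat.one_le_div_iff hd0 |>.mpr (Nat.le_of_dvd hr0 hd)
    have hnle : n ≤ r - 1 := by omega
    have hn1 : ((n:ℚ)+1) ≠ 0 := by positivity
    have hrec : ((r-1).choose (n+1) : ℚ) * (n+1) = ((r-1).choose n : ℚ) * ((r:ℚ) - 1 - n) := by
      have h0 := congrArg (fun x : ℕ => (x : ℚ)) (Nat.choose_succ_right_eq (r-1) n)
      push_cast [Nat.cast_sub hnle, Nat.cast_sub (by omega : 1 ≤ r)] at h0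
      push_cast [Nat.cast_sub (by omega : 1 ≤ r)]
      linarith [h0]
    have e1 : ((r-1).choose (n+1) : ℚ) = ((r-1).choose n : ℚ) * (((r:ℚ) - 1 - n) / (n+1)) := by
      rw [← mul_div_assoc, eq_div_iff hn1]
      linarith [hrec]
    rw [icc_succ, Finset.filter_insert]
    by_cases hdvd : d ∣ (n+1)
    · simp only [hdvd, not_true_eq_false, if_false]
      have hsd : (n+1)/d = n/d + 1 := Nat.succ_div_of_dvd hdvd
      rw [hsd]
      set s := n / d with hsdef
      have hds : d * (s+1) = n + 1 := by
        rw [Nat.mul_comm]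
        have h0 := Nat.div_mul_cancel hdvd
        rw [hsd] at h0
        exact h0
      have hsm : s + 1 < m := by
        by_contra hc
        push_neg at hc
        have : d * m ≤ d * (s+1) := Nat.mul_le_mul_left d hc
        omega
      have hsle : s ≤ m - 1 := by omega
      have hs1 : ((s:ℚ)+1) ≠ 0 := by positivity
      have hrec2 : ((m-1).choose (s+1) : ℚ) * (s+1) = ((m-1).choose s : ℚ) * ((m:ℚ) - 1 - s) := by
        have h0 := congrArg (fun x : ℕ => (x : ℚ)) (Nat.choose_succ_right_eq (m-1) s)
        push_cast [Nat.cast_sub hsle, Nat.cast_sub (by omega : 1 ≤ m)] at h0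
        push_cast [Nat.cast_sub (by omega : 1 ≤ m)]
        linarith [h0]
      have e2 : ((m-1).choose (s+1) : ℚ) = ((m-1).choose s : ℚ) * (((m:ℚ) - 1 - s) / (s+1)) := by
        rw [← mul_div_assoc, eq_div_iff hs1]
        linarith [hrec2]
      have hfrac : ((r:ℚ) - 1 - n) / (n+1) = ((m:ℚ) - 1 - s) / (s+1) := by
        rw [div_eq_div_iff hn1 hs1]
        have hr' : (r:ℚ) = d * m := by exact_mod_cast hm.symm
        have hn' : (n:ℚ) + 1 = d * (s+1) := by exact_mod_cast hds.symm
        nlinarith [hr', hn']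
      rw [e1, e2, IH, hfrac]
      ring
    · simp only [hdvd, not_false_eq_true, if_true]
      have hsd : (n+1)/d = n/d := Nat.succ_div_of_not_dvd hdvd
      rw [hsd, Finset.prod_insert (by simp [Finset.mem_filter, Finset.mem_Icc])]
      rw [e1, IH]
      push_cast
      ring

lemma main_bound (r d j : ℕ) (hd : d ∣ r) (hd0 : 0 < d) (hjr : 2 * j < r) (B : ℚ) (hB : 0 ≤ B)
    (T : Finset ℕ) (hT : T ⊆ (Finset.Icc 1 j).filter (fun i => ¬ d ∣ i))
    (hTB : ((r:ℚ) - 1) ≤ B * ∏ i ∈ T, (((r:ℚ) - i)/i)) :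
    ((r / d - 1).choose (j / d) : ℚ) / ((r - 1).choose j : ℚ) * ((r : ℚ) - 1) ≤ B := by
  have hjlt : j < r := by omega
  set S := (Finset.Icc 1 j).filter (fun i => ¬ d ∣ i) with hSdef
  set P := ∏ i ∈ S, (((r:ℚ) - i)/i) with hPdef
  have hfac : ∀ i ∈ S, (1:ℚ) ≤ ((r:ℚ) - i)/i := by
    intro i hi
    simp only [hSdef, Finset.mem_filter, Finset.mem_Icc] at hi
    obtain ⟨⟨h1, h2⟩, _⟩ := hi
    have hi0 : (0:ℚ) < i := by exact_mod_cast h1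
    rw [le_div_iff₀ hi0, one_mul]
    have : (2*i:ℕ) < r := by omega
    have : ((2*i:ℕ):ℚ) < r := by exact_mod_cast this
    push_cast at this
    linarith
  have hP0 : 0 < P := by
    apply Finset.prod_pos
    intro i hi
    exact lt_of_lt_of_le one_pos (hfac i hi)
  have hPT : ∏ i ∈ T, (((r:ℚ) - i)/i) ≤ P := by
    rw [hPdef, ← Finset.prod_sdiff hT]
    have h1 : (1:ℚ) ≤ ∏ i ∈ S \ T, (((r:ℚ) - i)/i) := by
      calc (1:ℚ) = ∏ _i ∈ S \ T, (1:ℚ) := by simp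
        _ ≤ ∏ i ∈ S \ T, (((r:ℚ) - i)/i) :=
            Finset.prod_le_prod (fun i _ => zero_le_one)
              (fun i hi => hfac i (Finset.mem_sdiff.mp hi).1)
    have hTpos : 0 ≤ ∏ i ∈ T, (((r:ℚ) - i)/i) :=
      Finset.prod_nonneg (fun i hi => le_trans zero_le_one (hfac i (hT hi)))
    exact le_mul_of_one_le_left hTpos h1
  have hid := key_identity r d hd hd0 j hjlt
  rcases eq_or_ne (((r / d - 1).choose (j / d) : ℚ)) 0 with hN | hN
  · rw [hN]; simp; positivity
  · rw [hid, ← hSdef, ← hPdef]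
    rw [div_mul_eq_mul_div, div_le_iff₀ (by positivity)]
    calc ((r / d - 1).choose (j / d) : ℚ) * ((r:ℚ) - 1)
        ≤ ((r / d - 1).choose (j / d) : ℚ) * (B * P) := by
          apply mul_le_mul_of_nonneg_left _ (by positivity)
          calc ((r:ℚ) - 1) ≤ B * ∏ i ∈ T, (((r:ℚ) - i)/i) := hTB
            _ ≤ B * P := by
                rcases eq_or_lt_of_le hB with h | h
                · rw [← h]; simp
                · exact mul_le_mul_of_nonneg_left hPT (le_of_lt h)
      _ = B * (((r / d - 1).choose (j / d) : ℚ) * P) := by ring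


/-- The binomial estimates of Lemma 4.4: for `r > 6`, `1 < d ∣ r`, `2 ≤ j < r/2`
(with `r > 9` if `2j = r − 1`), the ratio `A = C(r/d − 1, ⌊j/d⌋) / C(r−1, j)` satisfies
the stated upper bounds. -/
theorem stmt6 (r d j : ℕ) (hr : 6 < r) (hd : d ∣ r) (hd1 : 1 < d)
    (hj2 : 2 ≤ j) (hjr : 2 * j < r) (hextra : 2 * j = r - 1 → 9 < r) :
    ((d = 2 ∧ j % 2 = 0) →
      ((r / d - 1).choose (j / d) : ℚ) / ((r - 1).choose j : ℚ) * ((r : ℚ) - 1) ≤ 1) ∧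
    ((d = 2 ∧ j % 2 = 1) →
      ((r / d - 1).choose (j / d) : ℚ) / ((r - 1).choose j : ℚ) * ((r : ℚ) - 1) ≤
        3 * ((r : ℚ) - 2 * j) / (2 * ((r : ℚ) - j))) ∧
    (2 < d →
      ((r / d - 1).choose (j / d) : ℚ) / ((r - 1).choose j : ℚ) * ((r : ℚ) - 1) ≤
        ((r : ℚ) - 2 * j) / ((r : ℚ) - j)) := by
  have hjq : (2:ℚ) ≤ j := by exact_mod_cast hj2
  have hrq : (7:ℚ) ≤ r := by exact_mod_cast hr
  have h2jq : 2 * (j:ℚ) + 1 ≤ r := by exact_mod_cast hjr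
  refine ⟨?_, ?_, ?_⟩
  · rintro ⟨rfl, hpar⟩
    apply main_bound r 2 j hd (by norm_num) hjr 1 zero_le_one {1}
    · intro i hi
      simp only [Finset.mem_singleton] at hi
      simp only [Finset.mem_filter, Finset.mem_Icc]
      omega
    · rw [Finset.prod_singleton]
      push_cast
      rw [one_mul, div_one]
  · rintro ⟨rfl, hpar⟩
    -- r even, j odd ≥ 3, r - 2j ≥ 2
    have hreven : 2 ∣ r := hd
    have hj3 : 3 ≤ j := by omega
    have hgap : 2 * j + 2 ≤ r := by omega
    have hj3q : (3:ℚ) ≤ j := by exact_mod_cast hj3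
    have hgapq : 2 * (j:ℚ) + 2 ≤ r := by exact_mod_cast hgap
    have hpos : (0:ℚ) < 2 * ((r:ℚ) - j) := by nlinarith
    apply main_bound r 2 j hd (by norm_num) hjr (3 * ((r:ℚ) - 2 * j) / (2 * ((r:ℚ) - j)))
      (div_nonneg (by linarith) (by linarith)) {1, 3}
    · intro i hi
      simp only [Finset.mem_insert, Finset.mem_singleton] at hi
      simp only [Finset.mem_filter, Finset.mem_Icc]
      omega
    · rw [Finset.prod_pair (by decide)]
      push_cast
      rw [div_mul_eq_mul_div, le_div_iff₀ hpos]
      have key : 2 * ((r:ℚ) - j) ≤ ((r:ℚ) - 2 * j) * ((r:ℚ) - 3) := by nlinarith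
      nlinarith [mul_le_mul_of_nonneg_left key (show (0:ℚ) ≤ (r:ℚ) - 1 by linarith)]
  · intro hd2
    have hdnot : ∀ i : ℕ, 0 < i → i < d → ¬ d ∣ i := by
      intro i hi0 hid hdvd
      exact absurd (Nat.le_of_dvd hi0 hdvd) (by omega)
    by_cases hcase : 2 * j + 2 ≤ r
    · have hgapq : 2 * (j:ℚ) + 2 ≤ r := by exact_mod_cast hcase
      have hpos : (0:ℚ) < (r:ℚ) - j := by nlinarith
      apply main_bound r d j hd (by omega) hjr (((r:ℚ) - 2 * j) / ((r:ℚ) - j))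
        (div_nonneg (by linarith) (by linarith)) {1, 2}
      · intro i hi
        simp only [Finset.mem_insert, Finset.mem_singleton] at hi
        simp only [Finset.mem_filter, Finset.mem_Icc]
        rcases hi with rfl | rfl
        · exact ⟨⟨le_refl 1, by omega⟩, hdnot 1 one_pos (by omega)⟩
        · exact ⟨⟨by omega, by omega⟩, hdnot 2 (by omega) (by omega)⟩
      · rw [Finset.prod_pair (by decide)]
        push_cast
        rw [div_mul_eq_mul_div, le_div_iff₀ hpos]
        have key : 2 * ((r:ℚ) - j) ≤ ((r:ℚ) - 2 * j) * ((r:ℚ) - 2) := by nlinarith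
        nlinarith [mul_le_mul_of_nonneg_left key (show (0:ℚ) ≤ (r:ℚ) - 1 by linarith)]
    · -- r = 2j + 1
      have hr2j : r = 2 * j + 1 := by omega
      have hr9 : 9 < r := hextra (by omega)
      have hj5 : 5 ≤ j := by omega
      have hj5q : (5:ℚ) ≤ j := by exact_mod_cast hj5
      have hrq2 : (r:ℚ) = 2 * j + 1 := by exact_mod_cast hr2j
      have hpos : (0:ℚ) < (r:ℚ) - j := by nlinarith
      have hdodd : ¬ 2 ∣ d := by
        intro h2d
        obtain ⟨k, hk⟩ := h2d.trans hd
        omega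
      by_cases hd3 : d = 3
      · subst hd3
        apply main_bound r 3 j hd (by norm_num) hjr (((r:ℚ) - 2 * j) / ((r:ℚ) - j))
          (div_nonneg (by linarith) (by linarith)) {1, 2, 4, 5}
        · intro i hi
          simp only [Finset.mem_insert, Finset.mem_singleton] at hi
          simp only [Finset.mem_filter, Finset.mem_Icc]
          omega
        · rw [Finset.prod_insert (by decide), Finset.prod_insert (by decide),
            Finset.prod_pair (by decide)]
          push_cast
          rw [div_mul_eq_mul_div, le_div_iff₀ hpos, hrq2]
          have key : 40 * ((j:ℚ) + 1) ≤ (2*(j:ℚ) - 1) * ((2*(j:ℚ) - 3) * (2*(j:ℚ) - 4)) := by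
            nlinarith [hj5q, sq_nonneg ((j:ℚ) - 5), mul_nonneg (mul_nonneg (sub_nonneg.2 hj5q) (sub_nonneg.2 hj5q)) (sub_nonneg.2 hj5q)]
          nlinarith [mul_le_mul_of_nonneg_left key (show (0:ℚ) ≤ 2 * (j:ℚ) by linarith)]
      · have hd5 : 5 ≤ d := by omega
        apply main_bound r d j hd (by omega) hjr (((r:ℚ) - 2 * j) / ((r:ℚ) - j))
          (div_nonneg (by linarith) (by linarith)) {1, 2, 3, 4}
        · intro i hi
          simp only [Finset.mem_insert, Finset.mem_singleton] at hi
          simp only [Finset.mem_filter, Finset.mem_Icc]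
          rcases hi with rfl | rfl | rfl | rfl
          · exact ⟨⟨by omega, by omega⟩, hdnot 1 (by omega) (by omega)⟩
          · exact ⟨⟨by omega, by omega⟩, hdnot 2 (by omega) (by omega)⟩
          · exact ⟨⟨by omega, by omega⟩, hdnot 3 (by omega) (by omega)⟩
          · exact ⟨⟨by omega, by omega⟩, hdnot 4 (by omega) (by omega)⟩
        · rw [Finset.prod_insert (by decide), Finset.prod_insert (by decide),
            Finset.prod_pair (by decide)]
          push_cast
          rw [div_mul_eq_mul_div, le_div_iff₀ hpos, hrq2]
          have key : 24 * ((j:ℚ) + 1) ≤ (2*(j:ℚ) - 1) * ((2*(j:ℚ) - 2) * (2*(j:ℚ) - 3)) := by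
            nlinarith [hj5q, sq_nonneg ((j:ℚ) - 5), mul_nonneg (mul_nonneg (sub_nonneg.2 hj5q) (sub_nonneg.2 hj5q)) (sub_nonneg.2 hj5q)]
          nlinarith [mul_le_mul_of_nonneg_left key (show (0:ℚ) ≤ 2 * (j:ℚ) by linarith)]
end

section
/- For every integer r ≥ 1 and every 0 ≤ j ≤ r−1, writing, for each divisor d of r, j = d·l_d + k_d with l_d = ⌊j/d⌋ and 0 ≤ k_d ≤ d−1, one has r·m_{j,1}(r) = Σ_{d | r} μ(d)·(−1)^{k_d}·(−1)^{(d+1)·l_d}·C(r/d − 1, l_d). -/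
open Finset

/-- `m_{i,1}(r) = Σ_{k=0}^i (−1)^{i−k} e_{k,1}(r)` where `e_{k,1}(r) = f_k(r)`:
the multiplicity of the hook `χ^{(r−i,1^i)}` in the Lie character `ψ^{(r)}`. -/
def m1 (r i : ℕ) : ℚ :=
  ∑ k ∈ Finset.range (i + 1), (-1 : ℚ) ^ (i - k) * f r k

lemma alt_sum (n L : ℕ) (hn : 1 ≤ n) :
    ∑ m ∈ range (L + 1), (-1 : ℚ) ^ m * (n.choose m : ℚ)
      = (-1) ^ L * ((n - 1).choose L : ℚ) := by
  obtain ⟨n, rfl⟩ : ∃ n', n = n' + 1 := ⟨n - 1, by omega⟩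
  induction L with
  | zero => simp
  | succ L ih =>
    rw [Finset.sum_range_succ, ih, Nat.add_sub_cancel, Nat.choose_succ_succ]
    simp only [Nat.succ_eq_add_one]
    push_cast
    ring

lemma divisors_gcd_eq (r k : ℕ) (hr : r ≠ 0) :
    (Nat.gcd r k).divisors = r.divisors.filter (· ∣ k) := by
  ext d
  simp only [Nat.mem_divisors, Finset.mem_filter, Nat.dvd_gcd_iff]
  have : Nat.gcd r k ≠ 0 := Nat.gcd_ne_zero_left hr
  tauto

lemma sum_filter_dvd (d N : ℕ) (hd : 0 < d) (g : ℕ → ℚ) :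
    ∑ k ∈ (range (N + 1)).filter (d ∣ ·), g k
      = ∑ m ∈ range (N / d + 1), g (d * m) := by
  refine Finset.sum_nbij' (fun k => k / d) (fun m => d * m) ?_ ?_ ?_ ?_ ?_
  · intro k hk
    simp only [Finset.mem_filter, Finset.mem_range] at hk ⊢
    have := Nat.div_le_div_right (c := d) (Nat.lt_succ_iff.mp hk.1)
    omega
  · intro m hm
    simp only [Finset.mem_filter, Finset.mem_range] at hm ⊢
    refine ⟨?_, Dvd.intro m rfl⟩
    have h1 : d * m ≤ d * (N / d) := Nat.mul_le_mul_left d (by omega)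
    have h2 : d * (N / d) ≤ N := Nat.mul_div_le N d
    omega
  · intro k hk
    simp only [Finset.mem_filter] at hk
    exact Nat.mul_div_cancel' hk.2
  · intro m _
    exact Nat.mul_div_cancel_left m hd
  · intro k hk
    simp only [Finset.mem_filter] at hk
    rw [Nat.mul_div_cancel' hk.2]

/-- Equation (4.9): writing `j = d·l_d + k_d` with `l_d = ⌊j/d⌋`, `0 ≤ k_d ≤ d−1`,
one has `r·m_{j,1}(r) = Σ_{d|r} μ(d)(−1)^{k_d}(−1)^{(d+1)l_d} C(r/d − 1, l_d)`. -/
theorem stmt7 (r j : ℕ) (hr : 1 ≤ r) (hj : j ≤ r - 1) :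
    (r : ℚ) * m1 r j =
      ∑ d ∈ r.divisors,
        ((ArithmeticFunction.moebius d : ℤ) : ℚ) * (-1) ^ (j % d) *
          (-1) ^ ((d + 1) * (j / d)) * ((r / d - 1).choose (j / d) : ℚ) := by
  have hrne : r ≠ 0 := by omega
  have hrQ : (r : ℚ) ≠ 0 := by exact_mod_cast hrne
  unfold m1 f
  rw [Finset.mul_sum]
  have step1 : ∀ k ∈ range (j + 1),
      (r : ℚ) * ((-1) ^ (j - k) * ((1 / (r : ℚ)) * ∑ d ∈ (Nat.gcd r k).divisors,
        ((ArithmeticFunction.moebius d : ℤ) : ℚ) * (-1) ^ (k + k / d) *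
          ((r / d).choose (k / d) : ℚ)))
      = ∑ d ∈ r.divisors, (if d ∣ k then
          ((ArithmeticFunction.moebius d : ℤ) : ℚ) *
            ((-1) ^ (j - k) * (-1) ^ (k + k / d)) *
            ((r / d).choose (k / d) : ℚ) else 0) := by
    intro k _
    rw [divisors_gcd_eq r k hrne, Finset.sum_filter]
    rw [show (r : ℚ) * ((-1) ^ (j - k) * ((1 / (r : ℚ)) * ∑ d ∈ r.divisors,
        (if d ∣ k then ((ArithmeticFunction.moebius d : ℤ) : ℚ) * (-1) ^ (k + k / d) *
          ((r / d).choose (k / d) : ℚ) else 0)))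
      = (-1) ^ (j - k) * ∑ d ∈ r.divisors,
        (if d ∣ k then ((ArithmeticFunction.moebius d : ℤ) : ℚ) * (-1) ^ (k + k / d) *
          ((r / d).choose (k / d) : ℚ) else 0) from by field_simp; try ring]
    rw [Finset.mul_sum]
    refine Finset.sum_congr rfl fun d _ => ?_
    split <;> ring
  rw [Finset.sum_congr rfl step1, Finset.sum_comm]
  refine Finset.sum_congr rfl fun d hd => ?_
  have hddvd : d ∣ r := (Nat.mem_divisors.mp hd).1
  have hdpos : 0 < d := Nat.pos_of_mem_divisors hd
  have hrd : 1 ≤ r / d := Nat.one_le_div_iff hdpos |>.mpr (Nat.le_of_dvd (by omega) hddvd)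
  rw [← Finset.sum_filter, sum_filter_dvd d j hdpos]
  have step2 : ∀ m ∈ range (j / d + 1),
      ((ArithmeticFunction.moebius d : ℤ) : ℚ) *
          ((-1) ^ (j - d * m) * (-1) ^ (d * m + d * m / d)) *
          ((r / d).choose (d * m / d) : ℚ)
      = ((ArithmeticFunction.moebius d : ℤ) : ℚ) * (-1) ^ j *
          ((-1) ^ m * ((r / d).choose m : ℚ)) := by
    intro m hm
    rw [Nat.mul_div_cancel_left m hdpos]
    have hdm : d * m ≤ j := by
      have h1 : d * m ≤ d * (j / d) := Nat.mul_le_mul_left d (by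
        simpa [Nat.lt_succ_iff] using hm)
      have h2 : d * (j / d) ≤ j := Nat.mul_div_le j d
      omega
    have hsign : (-1 : ℚ) ^ (j - d * m) * (-1) ^ (d * m + m) = (-1) ^ j * (-1) ^ m := by
      rw [← pow_add, ← pow_add]
      congr 1
      omega
    rw [hsign]
    ring
  rw [Finset.sum_congr rfl step2, ← Finset.mul_sum, alt_sum (r / d) (j / d) hrd]
  have hsign2 : (-1 : ℚ) ^ j * (-1) ^ (j / d) = (-1) ^ (j % d) * (-1) ^ ((d + 1) * (j / d)) := by
    rw [← pow_add, ← pow_add]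
    congr 1
    obtain ⟨q, s, h1, h2⟩ : ∃ q s, j / d = q ∧ j % d = s := ⟨_, _, rfl, rfl⟩
    have h : d * q + s = j := by rw [← h1, ← h2]; exact Nat.div_add_mod j d
    rw [h1, h2, ← h]
    ring
  rw [show ((ArithmeticFunction.moebius d : ℤ) : ℚ) * (-1) ^ j *
      ((-1) ^ (j / d) * ((r / d - 1).choose (j / d) : ℚ))
    = ((ArithmeticFunction.moebius d : ℤ) : ℚ) * ((-1) ^ j * (-1) ^ (j / d)) *
      ((r / d - 1).choose (j / d) : ℚ) from by ring, hsign2]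
  ring
end

section
/- For all integers n ≥ 1 and 0 ≤ k ≤ n, the number of subsets {a_1 < a_2 < … < a_k} ⊆ {1,…,n} of size k with a_1 + a_2 + … + a_k ≡ 1 (mod n) equals (1/n)·Σ_{d | gcd(n,k)} μ(d)·(−1)^{k + k/d}·C(n/d, k/d). -/
/-!
Roots-of-unity filter: summing `z ^ (∑ S - 1)` over all `n`-th roots of unity `z` and all
`k`-subsets `S` counts `n` times the subsets with `∑ S ≡ 1 (mod n)`. Group the roots by their order
`e ∣ n`. For `z` of order `e`, Vieta applied to `∏_{i=1}^{n} (X + z^i) = (X^e - (-1)^e)^{n/e}` gives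
`∑_{|S|=k} z^{∑ S} = [e ∣ k] (-1)^{k+k/e} C(n/e, k/e)`, independently of `z`; and the primitive
`e`-th roots sum to `μ(e)`, by Möbius inversion of `∑_{d ∣ N} ∑_{ord z = d} z = [N = 1]`.
-/

open Finset Polynomial

namespace IsPrimitiveRoot

variable {R : Type*} [CommRing R] [IsDomain R] {ζ : R} {n : ℕ}

theorem sum_nthRootsFinset_eq_sum_range {M : Type*} [AddCommMonoid M] (hζ : IsPrimitiveRoot ζ n)
    (f : R → M) : ∑ z ∈ nthRootsFinset n (1 : R), f z = ∑ i ∈ range n, f (ζ ^ i) := by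
  classical
  rw [nthRootsFinset, ← Multiset.toFinset_eq (nthRoots_one_nodup hζ), Finset.sum_mk,
    hζ.nthRoots_eq (one_pow n)]
  simp [Finset.sum, Multiset.map_map]

theorem sum_nthRootsFinset_pow (hζ : IsPrimitiveRoot ζ n) (m : ℕ) :
    ∑ z ∈ nthRootsFinset n (1 : R), z ^ m = if n ∣ m then (n : R) else 0 := by
  rw [hζ.sum_nthRootsFinset_eq_sum_range]
  split_ifs with h
  · obtain ⟨c, rfl⟩ := h
    have h1 (i : ℕ) : (ζ ^ i) ^ (n * c) = 1 := by
      rw [← pow_mul, mul_left_comm, pow_mul, hζ.pow_eq_one, one_pow]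
    simp [h1]
  · have hne : ζ ^ m - 1 ≠ 0 := sub_ne_zero.2 fun h' => h ((hζ.pow_eq_one_iff_dvd m).1 h')
    apply eq_zero_of_ne_zero_of_mul_right_eq_zero hne
    simp_rw [← pow_mul, mul_comm, pow_mul]
    rw [mul_comm, geom_sum_mul, ← pow_mul, mul_comm, pow_mul, hζ.pow_eq_one, one_pow, sub_self]

end IsPrimitiveRoot

open ArithmeticFunction in
theorem Complex.sum_primitiveRoots_eq_moebius (e : ℕ) :
    ∑ z ∈ primitiveRoots e ℂ, z = ((moebius e : ℤ) : ℂ) := by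
  rcases e.eq_zero_or_pos with rfl | he
  · simp
  have hsum (N : ℕ) (hN : 0 < N) :
      ∑ d ∈ N.divisors, ∑ z ∈ primitiveRoots d ℂ, z = if N = 1 then 1 else 0 := by
    rw [← sum_biUnion fun _ _ _ _ hij => IsPrimitiveRoot.disjoint hij,
      ← IsPrimitiveRoot.nthRoots_one_eq_biUnion_primitiveRoots]
    have := (Complex.isPrimitiveRoot_exp N hN.ne').sum_nthRootsFinset_pow 1
    simp only [pow_one, Nat.dvd_one] at this
    rw [this]
    split_ifs <;> simp_all
  rw [← (sum_eq_iff_sum_mul_moebius_eq.1 hsum) e he, Nat.sum_divisorsAntidiagonal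
    (fun a b => ((moebius a : ℤ) : ℂ) * if b = 1 then 1 else 0), sum_eq_single e]
  · simp [Nat.div_self he]
  · intro d hd hde
    rw [if_neg fun h => hde (Nat.eq_of_dvd_of_div_eq_one (Nat.dvd_of_mem_divisors hd) h),
      mul_zero]
  · simp [he.ne']

theorem sum_primitiveRoots_inv {K : Type*} [Field K] (e : ℕ) :
    ∑ z ∈ primitiveRoots e K, z⁻¹ = ∑ z ∈ primitiveRoots e K, z := by
  rcases e.eq_zero_or_pos with rfl | he
  · simp
  refine sum_nbij' (·⁻¹) (·⁻¹) ?_ ?_ (by simp) (by simp) (by simp) <;>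
    exact fun z hz => (mem_primitiveRoots he).2 ((mem_primitiveRoots he).1 hz).inv

theorem Finset.prod_range_mul_eq_pow_of_periodic {M : Type*} [CommMonoid M] {f : ℕ → M} {e : ℕ}
    (hf : Function.Periodic f e) (m : ℕ) :
    ∏ i ∈ range (e * m), f i = (∏ i ∈ range e, f i) ^ m := by
  induction m with
  | zero => simp
  | succ m ih =>
    rw [mul_add_one, prod_range_add, ih, pow_succ]
    congr 1
    exact prod_congr rfl fun i _ => by simpa [add_comm, mul_comm] using hf.nat_mul m i

theorem Polynomial.coeff_X_pow_sub_C_pow {R : Type*} [CommRing R] {e : ℕ} (he : 0 < e) (c : R)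
    (m t : ℕ) :
    ((X ^ e - C c) ^ m).coeff t = if e ∣ t then (-c) ^ (m - t / e) * m.choose (t / e) else 0 := by
  have : (X ^ e - C c) ^ m = expand R e ((X + C (-c)) ^ m) := by
    simp [sub_eq_add_neg]
  rw [this, coeff_expand he, coeff_X_add_C_pow]

theorem IsPrimitiveRoot.prod_Icc_X_add_C_pow {R : Type*} [CommRing R] [IsDomain R] {ζ : R} {e : ℕ}
    (hζ : IsPrimitiveRoot ζ e) (he : 0 < e) (m : ℕ) :
    ∏ i ∈ Icc 1 (e * m), (X + C (ζ ^ i)) = (X ^ e - C ((-1) ^ e)) ^ m := by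
  have hperiod : Function.Periodic (fun i => X + C (ζ ^ (1 + i))) e := fun i => by
    simp [← add_assoc, pow_add, hζ.pow_eq_one]
  rw [← Finset.Ico_add_one_right_eq_Icc, Finset.prod_Ico_eq_prod_range, Nat.add_sub_cancel,
    prod_range_mul_eq_pow_of_periodic hperiod,
    X_pow_sub_C_eq_prod hζ he (α := -ζ) (by rw [neg_pow, hζ.pow_eq_one, mul_one])]
  congr 1
  refine prod_congr rfl fun i _ => ?_
  simp [pow_add, sub_eq_add_neg, mul_comm]

theorem IsPrimitiveRoot.sum_powersetCard_Icc_pow_sum {R : Type*} [CommRing R] [IsDomain R] {ζ : R}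
    {e n k : ℕ} (hζ : IsPrimitiveRoot ζ e) (hn : 0 < n) (he : e ∣ n) (hk : k ≤ n) :
    ∑ S ∈ (Icc 1 n).powersetCard k, ζ ^ (∑ i ∈ S, i) =
      if e ∣ k then (-1) ^ (k + k / e) * ((n / e).choose (k / e) : R) else 0 := by
  obtain ⟨m, rfl⟩ := he
  have he0 : 0 < e := Nat.pos_of_mul_pos_right hn
  have hcoeff := Finset.prod_X_add_C_coeff (Icc 1 (e * m)) (ζ ^ ·) (k := e * m - k) (by simp)
  rw [hζ.prod_Icc_X_add_C_pow he0, coeff_X_pow_sub_C_pow he0, Nat.card_Icc, Nat.add_sub_cancel,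
    Nat.sub_sub_self hk] at hcoeff
  have hprod (S : Finset ℕ) : ζ ^ (∑ i ∈ S, i) = ∏ i ∈ S, ζ ^ i := (prod_pow_eq_pow_sum S _ ζ).symm
  simp only [hprod]
  rw [← hcoeff, Nat.mul_div_cancel_left m he0]
  by_cases hek : e ∣ k
  · obtain ⟨b, rfl⟩ := hek
    have hbm : b ≤ m := Nat.le_of_mul_le_mul_left hk he0
    rw [if_pos (Nat.dvd_sub (dvd_mul_right e m) (dvd_mul_right e b)), if_pos (dvd_mul_right e b),
      ← Nat.mul_sub, Nat.mul_div_cancel_left _ he0, Nat.mul_div_cancel_left _ he0,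
      Nat.sub_sub_self hbm, Nat.choose_symm hbm, neg_eq_neg_one_mul, ← pow_succ', ← pow_mul,
      add_one_mul]
  · rw [if_neg hek, if_neg fun h => hek ?_]
    rw [← Nat.sub_sub_self hk]
    exact Nat.dvd_sub (dvd_mul_right e m) h

theorem Nat.modEq_iff_dvd_add {n a r t : ℕ} (hrt : n ∣ r + t) : a ≡ r [MOD n] ↔ n ∣ a + t :=
  ⟨fun h => (Nat.modEq_zero_iff_dvd.1 ((h.add_right t).trans (Nat.modEq_zero_iff_dvd.2 hrt))),
    fun h => Nat.ModEq.add_right_cancel' t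
      ((Nat.modEq_zero_iff_dvd.2 h).trans (Nat.modEq_zero_iff_dvd.2 hrt).symm)⟩

theorem IsPrimitiveRoot.natCast_mul_card_filter_modEq {R ι : Type*} [CommRing R] [IsDomain R]
    {ζ : R} {n : ℕ} (hζ : IsPrimitiveRoot ζ n) (A : Finset ι) (s : ι → ℕ) {r t : ℕ}
    (hrt : n ∣ r + t) :
    (n : R) * #{x ∈ A | s x ≡ r [MOD n]} =
      ∑ z ∈ nthRootsFinset n (1 : R), z ^ t * ∑ x ∈ A, z ^ s x := by
  calc (n : R) * #{x ∈ A | s x ≡ r [MOD n]}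
      = ∑ x ∈ A, if n ∣ s x + t then (n : R) else 0 := by
        rw [sum_ite, sum_const_zero, add_zero, sum_const, nsmul_eq_mul, mul_comm]
        simp only [Nat.modEq_iff_dvd_add hrt]
    _ = ∑ x ∈ A, ∑ z ∈ nthRootsFinset n (1 : R), z ^ (s x + t) := by
        simp only [hζ.sum_nthRootsFinset_pow]
    _ = ∑ z ∈ nthRootsFinset n (1 : R), z ^ t * ∑ x ∈ A, z ^ s x := by
        rw [sum_comm]
        simp only [mul_sum, pow_add, mul_comm]

open ArithmeticFunction in
theorem natCast_mul_card_filter_sum_modEq_one {n k : ℕ} (hn : 0 < n) (hk : k ≤ n) :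
    (n : ℂ) * #{S ∈ (Icc 1 n).powersetCard k | ∑ i ∈ S, i ≡ 1 [MOD n]} =
      ∑ d ∈ (n.gcd k).divisors,
        ((moebius d : ℤ) : ℂ) * (-1) ^ (k + k / d) * ((n / d).choose (k / d) : ℂ) := by
  have hinner (e : ℕ) (he : e ∣ n) :
      ∑ z ∈ primitiveRoots e ℂ, z ^ (n - 1) * ∑ S ∈ (Icc 1 n).powersetCard k, z ^ ∑ i ∈ S, i =
        if e ∣ k then ((moebius e : ℤ) : ℂ) * (-1) ^ (k + k / e) * ((n / e).choose (k / e) : ℂ)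
        else 0 := by
    calc _ = ∑ z ∈ primitiveRoots e ℂ, z⁻¹ *
          if e ∣ k then (-1) ^ (k + k / e) * ((n / e).choose (k / e) : ℂ) else 0 := by
          refine sum_congr rfl fun z hz => ?_
          have hz := isPrimitiveRoot_of_mem_primitiveRoots hz
          have hinv : z ^ (n - 1) = z⁻¹ := eq_inv_of_mul_eq_one_left <| by
            rw [← pow_succ, Nat.sub_add_cancel hn, (hz.pow_eq_one_iff_dvd n).2 he]
          rw [hinv, hz.sum_powersetCard_Icc_pow_sum hn he hk]
      _ = _ := by
          rw [← sum_mul, sum_primitiveRoots_inv, Complex.sum_primitiveRoots_eq_moebius]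
          split_ifs <;> ring
  rw [(Complex.isPrimitiveRoot_exp n hn.ne').natCast_mul_card_filter_modEq _ _
      (t := n - 1) ⟨1, by omega⟩, IsPrimitiveRoot.nthRoots_one_eq_biUnion_primitiveRoots,
    sum_biUnion fun _ _ _ _ h => IsPrimitiveRoot.disjoint h,
    sum_congr rfl fun e he => hinner e (Nat.dvd_of_mem_divisors he), ← sum_filter]
  congr 1
  ext d
  simp [Nat.dvd_gcd_iff, hn.ne']

/-- The number of `k`-subsets `{a_1 < … < a_k}` of `{1,…,n}` with
`a_1 + … + a_k ≡ 1 (mod n)` equals `(1/n) Σ_{d | gcd(n,k)} μ(d)(−1)^{k+k/d} C(n/d, k/d)`. -/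
theorem stmt14 (n k : ℕ) (hn : 1 ≤ n) (hk : k ≤ n) :
    ((((Finset.Icc 1 n).powersetCard k).filter
        (fun S => (∑ a ∈ S, a) % n = 1 % n)).card : ℚ) =
      (1 / (n : ℚ)) * ∑ d ∈ (Nat.gcd n k).divisors,
        ((ArithmeticFunction.moebius d : ℤ) : ℚ) * (-1) ^ (k + k / d) *
          ((n / d).choose (k / d) : ℚ) := by
  have hcount : (n : ℚ) * #{S ∈ (Icc 1 n).powersetCard k | ∑ i ∈ S, i ≡ 1 [MOD n]} =
      ∑ d ∈ (n.gcd k).divisors,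
        ((ArithmeticFunction.moebius d : ℤ) : ℚ) * (-1) ^ (k + k / d) * ((n / d).choose (k / d)) :=
    Rat.cast_injective (α := ℂ) (by push_cast; exact natCast_mul_card_filter_sum_modEq_one hn hk)
  rw [← hcount, one_div, inv_mul_cancel_left₀ (by positivity)]
  rfl
end

section
/- Let r, s ≥ 1 with n = rs > 1, and let C_{(r^s)} ⊆ S_n be the conjugacy class of permutations that are products of s disjoint cycles of length r. Then Cellini's cyclic descent map on C_{(r^s)} is not closed under cyclic rotation: it is NOT the case that for every π ∈ C_{(r^s)} there exists π' ∈ C_{(r^s)} with CDes(π') = sh(CDes(π)). -/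
open Finset

/-- One-line notation value of a permutation at (1-indexed) position `i`:
`oneline π i = π_i` (as a number in `{1,…,n}`), and `0` if `i` is out of range. -/
def oneline {n : ℕ} (π : Equiv.Perm (Fin n)) (i : ℕ) : ℕ :=
  if h : i - 1 < n then (π ⟨i - 1, h⟩ : ℕ) + 1 else 0

/-- Cellini's cyclic descent set `CDes(π) = {i ∈ [n] : π_i > π_{i+1}}`,
with the convention `π_{n+1} := π_1`. -/
def CDes {n : ℕ} (π : Equiv.Perm (Fin n)) : Finset ℕ :=
  (Finset.Icc 1 n).filter fun i => oneline π (i % n + 1) < oneline π i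

/-- The cyclic shift map on subsets of `[n]`, induced by `i ↦ i + 1 (mod n)`. -/
def sh (n : ℕ) (S : Finset ℕ) : Finset ℕ := S.image fun i => i % n + 1

/-- The cycle type of a permutation, including fixed points as parts equal to `1`;
a multiset of parts summing to `n`. -/
def fullCycleType {n : ℕ} (π : Equiv.Perm (Fin n)) : Multiset ℕ :=
  π.cycleType + Multiset.replicate (n - π.support.card) 1

/-! A permutation commuting with the rotation `ρ = finRotate n` is determined by its cyclic
descent set: if `σ` commutes with `ρ` and `CDes π = CDes σ`, then `π * σ⁻¹` has no cyclic
descent except at the last position, so it is increasing and hence the identity.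
Since `sh (CDes (π * ρ)) = CDes π`, the permutation `ρ ^ s`, whose cycles all have length
`orderOf (ρ ^ s) = r`, forces `π' = ρ ^ (s - 1)`. But the cycles of `ρ ^ (s - 1)` all have
length `orderOf (ρ ^ (s - 1))`, which is not `r` when `rs > 1`. -/

open Equiv Equiv.Perm

namespace Equiv.Perm

variable {α : Type*} [Fintype α] [DecidableEq α]

theorem cycleType_eq_replicate_orderOf_of_pow_apply_eq_self {σ : Perm α}
    (h : ∀ (k : ℕ) (x : α), (σ ^ k) x = x → σ ^ k = 1) :
    σ.cycleType = Multiset.replicate (#σ.support / orderOf σ) (orderOf σ) := by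
  have hlen : ∀ m ∈ σ.cycleType, m = orderOf σ := by
    intro m hm
    obtain ⟨c, hc, rfl⟩ := Multiset.mem_map.mp ((cycleType_def σ) ▸ hm)
    have hcyc := (mem_cycleFactorsFinset_iff.mp hc).1
    obtain ⟨x, hx⟩ := hcyc.nonempty_support
    rw [Function.comp_apply, ← hcyc.orderOf, orderOf_eq_orderOf_iff]
    intro k
    rw [hcyc.pow_eq_one_iff' (mem_support.mp hx), cycle_is_cycleOf hx hc, cycleOf_pow_apply_self]
    exact ⟨h k x, fun h1 => by rw [h1]; rfl⟩
  have hcard : Multiset.card σ.cycleType * orderOf σ = #σ.support := by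
    rw [← sum_cycleType, Multiset.eq_replicate_card.mpr hlen, Multiset.sum_replicate,
      smul_eq_mul, Multiset.card_replicate]
  rw [← hcard, Nat.mul_div_cancel _ (orderOf_pos σ)]
  exact Multiset.eq_replicate_card.mpr hlen

theorem parts_partition_eq_replicate_orderOf_of_pow_apply_eq_self {σ : Perm α}
    (h : ∀ (k : ℕ) (x : α), (σ ^ k) x = x → σ ^ k = 1) :
    σ.partition.parts = Multiset.replicate (Fintype.card α / orderOf σ) (orderOf σ) := by
  rcases eq_or_ne σ 1 with rfl | hσ
  · simp [parts_partition]
  · have hsupp : σ.support = univ := eq_univ_of_forall fun x =>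
      mem_support.mpr fun hx => hσ (pow_one σ ▸ h 1 x (by rwa [pow_one]))
    rw [parts_partition, cycleType_eq_replicate_orderOf_of_pow_apply_eq_self h, hsupp, card_univ,
      Nat.sub_self, Multiset.replicate_zero, add_zero]

end Equiv.Perm

theorem orderOf_pow_sub_one_ne {G : Type*} [Monoid G] {g : G} {r s : ℕ}
    (hg : orderOf g = r * s) (hn : 1 < r * s) : orderOf (g ^ (s - 1)) ≠ r := by
  intro h
  have hr : 0 < r := Nat.pos_of_mul_pos_right (by omega : 0 < r * s)
  have hs : 0 < s := Nat.pos_of_mul_pos_left (by omega : 0 < r * s)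
  have hdvd : r * s ∣ r * (s - 1) := by
    rw [← hg, mul_comm]
    exact orderOf_dvd_of_pow_eq_one (by rw [pow_mul, ← h, pow_orderOf_eq_one])
  have hs1 : s - 1 = 0 :=
    Nat.eq_zero_of_dvd_of_lt (Nat.dvd_of_mul_dvd_mul_left hr hdvd) (by omega)
  rw [hs1, pow_zero, orderOf_one] at h
  subst h
  omega

section Rotation

variable {n : ℕ}

theorem orderOf_finRotate (hn : 2 ≤ n) : orderOf (finRotate n) = n := by
  rw [(isCycle_finRotate_of_le hn).orderOf, support_finRotate_of_le hn, card_univ,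
    Fintype.card_fin]

theorem fullCycleType_eq_parts_partition (π : Perm (Fin n)) :
    fullCycleType π = π.partition.parts := by
  rw [parts_partition, Fintype.card_fin]
  rfl

theorem fullCycleType_finRotate_pow (hn : 2 ≤ n) (k : ℕ) :
    fullCycleType (finRotate n ^ k) =
      Multiset.replicate (n / orderOf (finRotate n ^ k)) (orderOf (finRotate n ^ k)) := by
  rw [fullCycleType_eq_parts_partition, parts_partition_eq_replicate_orderOf_of_pow_apply_eq_self,
    Fintype.card_fin]
  intro m x hx
  rw [← pow_mul] at hx ⊢
  have hx' : finRotate n x ≠ x := mem_support.mp (by simp [support_finRotate_of_le hn])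
  exact ((isCycle_finRotate_of_le hn).pow_eq_one_iff' hx').mpr hx

theorem val_finRotate_apply [NeZero n] (x : Fin n) :
    (finRotate n x : ℕ) = ((x : ℕ) + 1) % n := by
  simp [Fin.val_add]

theorem oneline_val_add_one (π : Perm (Fin n)) (x : Fin n) :
    oneline π (x + 1) = π x + 1 := by
  simp [oneline]

/-- The cyclic descents of `π`, indexed from `0`: `x` is one iff `x + 1 ∈ CDes π`. -/
def cyclicDescents (π : Perm (Fin n)) : Finset (Fin n) := {x | π (finRotate n x) < π x}

@[simp]
theorem mem_cyclicDescents {π : Perm (Fin n)} {x : Fin n} :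
    x ∈ cyclicDescents π ↔ π (finRotate n x) < π x := by
  simp [cyclicDescents]

theorem val_add_one_mem_CDes_iff [NeZero n] (π : Perm (Fin n)) (x : Fin n) :
    (x : ℕ) + 1 ∈ CDes π ↔ x ∈ cyclicDescents π := by
  rw [CDes, mem_cyclicDescents, mem_filter, ← val_finRotate_apply, oneline_val_add_one,
    oneline_val_add_one]
  simp [x.isLt]

theorem CDes_eq_image_cyclicDescents [NeZero n] (π : Perm (Fin n)) :
    CDes π = (cyclicDescents π).image fun x : Fin n => (x : ℕ) + 1 := by
  ext i
  rw [mem_image]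
  constructor
  · intro hi
    obtain ⟨h1, h2⟩ := mem_Icc.mp (mem_filter.mp hi).1
    refine ⟨⟨i - 1, by omega⟩, ?_, Nat.sub_add_cancel h1⟩
    rwa [← val_add_one_mem_CDes_iff, Fin.val_mk, Nat.sub_add_cancel h1]
  · rintro ⟨x, hx, rfl⟩
    exact (val_add_one_mem_CDes_iff π x).mpr hx

theorem cyclicDescents_mul_inv_of_commute (π : Perm (Fin n)) {σ : Perm (Fin n)}
    (hσ : Commute σ (finRotate n)) :
    cyclicDescents (π * σ⁻¹) = (cyclicDescents π).map σ.toEmbedding := by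
  ext y
  rw [mem_map_equiv, mem_cyclicDescents, mem_cyclicDescents]
  simp only [Perm.mul_apply, ← Perm.mul_apply σ⁻¹, hσ.inv_left.eq]
  rfl

theorem eq_one_of_cyclicDescents_subset [NeZero n] {τ : Perm (Fin n)}
    (h : cyclicDescents τ ⊆ {-1}) : τ = 1 := by
  have hasc : ∀ y, y < finRotate n y → τ y < τ (finRotate n y) := by
    intro y hy
    have hy' : y ∉ cyclicDescents τ := fun hmem =>
      (lt_finRotate_iff_ne_neg_one y).mp hy (mem_singleton.mp (h hmem))
    rw [mem_cyclicDescents, not_lt] at hy'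
    exact hy'.lt_of_ne (τ.injective.ne hy.ne)
  obtain ⟨m, rfl⟩ := Nat.exists_eq_succ_of_ne_zero (NeZero.ne n)
  have hmono : StrictMono τ := Fin.strictMono_iff_lt_succ.mpr fun i => by
    simpa [Fin.coeSucc_eq_succ] using hasc i.castSucc (by simp [Fin.coeSucc_eq_succ])
  exact Equiv.ext (congrFun hmono.eq_id)

theorem eq_of_CDes_eq_of_commute [NeZero n] {π σ : Perm (Fin n)}
    (hσ : Commute σ (finRotate n)) (h : CDes π = CDes σ) : π = σ := by
  have hval : Function.Injective fun x : Fin n => (x : ℕ) + 1 :=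
    fun x y hxy => Fin.ext (Nat.add_right_cancel hxy)
  have hcd : cyclicDescents π = cyclicDescents σ := by
    apply image_injective hval
    rwa [← CDes_eq_image_cyclicDescents, ← CDes_eq_image_cyclicDescents]
  rw [← mul_inv_eq_one]
  apply eq_one_of_cyclicDescents_subset
  rw [cyclicDescents_mul_inv_of_commute π hσ, hcd, ← cyclicDescents_mul_inv_of_commute σ hσ,
    mul_inv_cancel]
  intro y hy
  by_contra hne
  rw [mem_cyclicDescents, Perm.one_apply, Perm.one_apply] at hy
  exact lt_asymm hy ((lt_finRotate_iff_ne_neg_one y).mpr (by simpa using hne))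

theorem sh_CDes_mul_finRotate [NeZero n] (π : Perm (Fin n)) :
    sh n (CDes (π * finRotate n)) = CDes π := by
  have hcd : cyclicDescents π =
      (cyclicDescents (π * finRotate n)).map (finRotate n).toEmbedding := by
    simpa using cyclicDescents_mul_inv_of_commute (π * finRotate n) (Commute.refl (finRotate n))
  rw [CDes_eq_image_cyclicDescents, CDes_eq_image_cyclicDescents, hcd, sh, map_eq_image,
    image_image, image_image]
  simp only [Function.comp_def, Equiv.coe_toEmbedding, val_finRotate_apply]

end Rotation

theorem stmt15_general (r s : ℕ) (hn : 1 < r * s) :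
    ¬ ∀ π : Equiv.Perm (Fin (r * s)),
        fullCycleType π = Multiset.replicate s r →
        ∃ π' : Equiv.Perm (Fin (r * s)),
          fullCycleType π' = Multiset.replicate s r ∧
          CDes π' = sh (r * s) (CDes π) := by
  intro H
  have hr : 0 < r := Nat.pos_of_mul_pos_right (by omega : 0 < r * s)
  have hs : 0 < s := Nat.pos_of_mul_pos_left (by omega : 0 < r * s)
  have : NeZero (r * s) := ⟨by omega⟩
  have hρ : orderOf (finRotate (r * s)) = r * s := orderOf_finRotate hn
  have hρs : orderOf (finRotate (r * s) ^ s) = r := by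
    rw [orderOf_pow_of_dvd hs.ne' (by rw [hρ]; exact dvd_mul_left s r), hρ,
      Nat.mul_div_cancel r hs]
  obtain ⟨π', hπ', hCDes⟩ := H (finRotate (r * s) ^ s) (by
    rw [fullCycleType_finRotate_pow hn, hρs, Nat.mul_div_cancel_left s hr])
  have hπ'_eq : π' = finRotate (r * s) ^ (s - 1) := by
    refine eq_of_CDes_eq_of_commute (Commute.self_pow _ _).symm ?_
    rw [hCDes, ← sh_CDes_mul_finRotate (finRotate (r * s) ^ (s - 1)), ← pow_succ,
      Nat.sub_add_cancel hs]
  rw [hπ'_eq, fullCycleType_finRotate_pow hn] at hπ'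
  have hr_mem : r ∈ Multiset.replicate s r := Multiset.mem_replicate.mpr ⟨hs.ne', rfl⟩
  rw [← hπ'] at hr_mem
  exact orderOf_pow_sub_one_ne hρ hn (Multiset.eq_of_mem_replicate hr_mem).symm

/-- For `n = rs > 1`, Cellini's cyclic descent map on the conjugacy class
`C_{(r^s)}` is not closed under cyclic rotation. -/
theorem stmt15 (r s : ℕ) (hr : 1 ≤ r) (hs : 1 ≤ s) (hn : 1 < r * s) :
    ¬ ∀ π : Equiv.Perm (Fin (r * s)),
        fullCycleType π = Multiset.replicate s r →
        ∃ π' : Equiv.Perm (Fin (r * s)),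
          fullCycleType π' = Multiset.replicate s r ∧
          CDes π' = sh (r * s) (CDes π) :=
  stmt15_general r s hn
end

section
/- Let n ≥ 1, let T be a finite set equipped with a map Des : T → 2^{[n−1]}, and let (cDes, p) be a cyclic extension of Des on T. Then for every 0 ≤ k ≤ n−1, #{t ∈ T : Des(t) = [k]} = #{t ∈ T : cDes(t) = [k]} + #{t ∈ T : cDes(t) = [k+1]}, where [k] := {1,…,k} and [0] := ∅. Consequently, the polynomial Σ_{k=0}^{n−1} #{t ∈ T : Des(t) = [k]}·x^k is divisible by (1+x) in ℤ[x], with quotient having nonnegative coefficients. -/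
open Finset

/-- `(cDes, p)` is a cyclic extension of the descent map `DesT : T → 2^{[n-1]}`. -/
def IsCyclicExtension {T : Type*} (n : ℕ) (DesT : T → Finset ℕ)
    (cDes : T → Finset ℕ) (p : T ≃ T) : Prop :=
  ∀ t : T,
    cDes t ⊆ Finset.Icc 1 n ∧
    cDes t ∩ Finset.Icc 1 (n - 1) = DesT t ∧
    cDes (p t) = sh n (cDes t) ∧
    cDes t ≠ ∅ ∧ cDes t ≠ Finset.Icc 1 n

lemma mod_inj_on_Icc {n x y : ℕ} (hx1 : 1 ≤ x) (hxn : x ≤ n) (hy1 : 1 ≤ y)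
    (hyn : y ≤ n) (h : x % n = y % n) : x = y := by
  rcases eq_or_lt_of_le hxn with rfl | hx
  · rcases eq_or_lt_of_le hyn with rfl | hy
    · rfl
    · rw [Nat.mod_self, Nat.mod_eq_of_lt hy] at h; omega
  · rcases eq_or_lt_of_le hyn with rfl | hy
    · rw [Nat.mod_self, Nat.mod_eq_of_lt hx] at h; omega
    · rw [Nat.mod_eq_of_lt hx, Nat.mod_eq_of_lt hy] at h; omega

lemma sh_subset_aux {n : ℕ} {S S' : Finset ℕ} (hS : S ⊆ Finset.Icc 1 n)
    (hS' : S' ⊆ Finset.Icc 1 n) (h : sh n S ⊆ sh n S') : S ⊆ S' := by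
  intro x hx
  have hx' : x % n + 1 ∈ sh n S := Finset.mem_image_of_mem _ hx
  obtain ⟨y, hy, hxy⟩ := Finset.mem_image.mp (h hx')
  have h1 := Finset.mem_Icc.mp (hS hx)
  have h2 := Finset.mem_Icc.mp (hS' hy)
  have : y = x := mod_inj_on_Icc h2.1 h2.2 h1.1 h1.2 (by omega)
  rwa [this] at hy

lemma sh_inj {n : ℕ} {S S' : Finset ℕ} (hS : S ⊆ Finset.Icc 1 n)
    (hS' : S' ⊆ Finset.Icc 1 n) (h : sh n S = sh n S') : S = S' :=
  Finset.Subset.antisymm (sh_subset_aux hS hS' h.le) (sh_subset_aux hS' hS h.ge)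

lemma sh_insert {n k : ℕ} (hk : k < n) :
    sh n (insert n (Finset.Icc 1 k)) = Finset.Icc 1 (k + 1) := by
  ext x
  simp only [sh, Finset.mem_image, Finset.mem_insert, Finset.mem_Icc]
  constructor
  · rintro ⟨i, hi | hi, rfl⟩
    · subst hi; rw [Nat.mod_self]; omega
    · rw [Nat.mod_eq_of_lt (by omega)]; omega
  · intro hx
    rcases eq_or_ne x 1 with rfl | hx1
    · exact ⟨n, Or.inl rfl, by rw [Nat.mod_self]⟩
    · exact ⟨x - 1, Or.inr (by omega), by rw [Nat.mod_eq_of_lt (by omega)]; omega⟩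

open Polynomial in
/-- Lemma 3.1 / Lemma 3.3.1: if `(cDes, p)` is a cyclic extension of `Des` on a finite
set `T`, then for `0 ≤ k ≤ n−1` the fiber of `Des` over `[k] = {1,…,k}` splits as the
fibers of `cDes` over `[k]` and `[k+1]`; consequently
`Σ_{k=0}^{n−1} #{t : Des t = [k]} x^k` is divisible by `1 + x` in `ℤ[x]` with a
quotient having nonnegative coefficients. -/
theorem stmt18 (n : ℕ) (hn : 1 ≤ n) {T : Type*} [Fintype T]
    (DesT : T → Finset ℕ) (hDesT : ∀ t, DesT t ⊆ Finset.Icc 1 (n - 1))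
    (cDes : T → Finset ℕ) (p : T ≃ T)
    (hext : IsCyclicExtension n DesT cDes p) :
    (∀ k, k ≤ n - 1 →
      (Finset.univ.filter fun t => DesT t = Finset.Icc 1 k).card =
        (Finset.univ.filter fun t => cDes t = Finset.Icc 1 k).card +
        (Finset.univ.filter fun t => cDes t = Finset.Icc 1 (k + 1)).card) ∧
    ∃ Q : Polynomial ℤ, (∀ k, 0 ≤ Q.coeff k) ∧
      (∑ k ∈ Finset.range n,
        C (((Finset.univ.filter fun t => DesT t = Finset.Icc 1 k).card : ℤ)) * X ^ k) =
      (1 + X) * Q := by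
  classical
  have key : ∀ k, k ≤ n - 1 →
      (Finset.univ.filter fun t => DesT t = Finset.Icc 1 k).card =
        (Finset.univ.filter fun t => cDes t = Finset.Icc 1 k).card +
        (Finset.univ.filter fun t => cDes t = Finset.Icc 1 (k + 1)).card := by
    intro k hk
    have hkn : k < n := by omega
    have hnI : n ∉ Finset.Icc 1 k := by simp [Finset.mem_Icc]; omega
    -- the three fibers
    set B := Finset.univ.filter fun t => cDes t = Finset.Icc 1 k with hB
    set Cs := Finset.univ.filter fun t => cDes t = insert n (Finset.Icc 1 k) with hCs
    set D := Finset.univ.filter fun t => cDes t = Finset.Icc 1 (k + 1) with hD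
    have hsplit : (Finset.univ.filter fun t => DesT t = Finset.Icc 1 k) = B ∪ Cs := by
      ext t
      obtain ⟨hsub, hcap, -, -, -⟩ := hext t
      simp only [hB, hCs, Finset.mem_filter, Finset.mem_union, Finset.mem_univ, true_and]
      constructor
      · intro h
        have h1 : Finset.Icc 1 k ⊆ cDes t := by
          rw [← h, ← hcap]; exact Finset.inter_subset_left
        have h2 : ∀ x ∈ cDes t, x ∈ Finset.Icc 1 k ∨ x = n := by
          intro x hx
          have hx' := Finset.mem_Icc.mp (hsub hx)
          rcases eq_or_ne x n with rfl | hxn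
          · exact Or.inr rfl
          · left
            have : x ∈ cDes t ∩ Finset.Icc 1 (n - 1) := by
              simp [Finset.mem_inter, Finset.mem_Icc, hx]; omega
            rw [hcap, h] at this; exact this
        by_cases hmem : n ∈ cDes t
        · right
          apply Finset.Subset.antisymm
          · intro x hx
            rcases h2 x hx with h' | h'
            · exact Finset.mem_insert_of_mem h'
            · simp [h']
          · intro x hx
            rcases Finset.mem_insert.mp hx with rfl | h'
            · exact hmem
            · exact h1 h'
        · left
          apply Finset.Subset.antisymm
          · intro x hx
            rcases h2 x hx with h' | h'
            · exact h'
            · exact absurd (h' ▸ hx) hmem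
          · exact h1
      · rintro (h | h)
        · rw [← hcap, h]
          ext x; simp only [Finset.mem_inter, Finset.mem_Icc]; omega
        · rw [← hcap, h, Finset.insert_inter_of_notMem (by simp [Finset.mem_Icc]; omega)]
          ext x; simp only [Finset.mem_inter, Finset.mem_Icc]; omega
    have hdisj : Disjoint B Cs := by
      rw [Finset.disjoint_left]
      intro t ht ht'
      simp only [hB, hCs, Finset.mem_filter] at ht ht'
      have : n ∈ Finset.Icc 1 k := by
        rw [ht.2] at ht'; rw [ht'.2]; exact Finset.mem_insert_self _ _
      exact hnI this
    have hcard : Cs.card = D.card := by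
      refine Finset.card_bij (fun t _ => p t) ?_ ?_ ?_
      · intro t ht
        simp only [hCs, Finset.mem_filter] at ht
        obtain ⟨-, -, hp, -, -⟩ := hext t
        simp only [hD, Finset.mem_filter, Finset.mem_univ, true_and]
        rw [hp, ht.2, sh_insert hkn]
      · intro a _ b _ h
        exact p.injective h
      · intro t ht
        simp only [hD, Finset.mem_filter, Finset.mem_univ, true_and] at ht
        refine ⟨p.symm t, ?_, p.apply_symm_apply t⟩
        obtain ⟨hsub', -, hp, -, -⟩ := hext (p.symm t)
        rw [p.apply_symm_apply] at hp
        have hins : insert n (Finset.Icc 1 k) ⊆ Finset.Icc 1 n := by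
          intro x hx
          rcases Finset.mem_insert.mp hx with rfl | h'
          · simp [Finset.mem_Icc]; omega
          · have := Finset.mem_Icc.mp h'
            simp [Finset.mem_Icc]; omega
        simp only [hCs, Finset.mem_filter, Finset.mem_univ, true_and]
        exact sh_inj hsub' hins (by rw [← hp, ht, ← sh_insert hkn])
    rw [hsplit, Finset.card_union_of_disjoint hdisj, hcard]
  refine ⟨key, ?_⟩
  set b : ℕ → ℤ := fun j => ((Finset.univ.filter fun t => cDes t = Finset.Icc 1 j).card : ℤ)
    with hb
  have hb0 : b 0 = 0 := by
    simp only [hb, Nat.cast_eq_zero, Finset.card_eq_zero, Finset.filter_eq_empty_iff]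
    intro t _
    obtain ⟨-, -, -, hne, -⟩ := hext t
    simpa using hne
  have hbn : b n = 0 := by
    simp only [hb, Nat.cast_eq_zero, Finset.card_eq_zero, Finset.filter_eq_empty_iff]
    intro t _
    obtain ⟨-, -, -, -, hne⟩ := hext t
    exact hne
  refine ⟨∑ k ∈ Finset.range n, C (b (k + 1)) * X ^ k, ?_, ?_⟩
  · intro m
    rw [Polynomial.finset_sum_coeff]
    apply Finset.sum_nonneg
    intro k _
    rw [Polynomial.coeff_C_mul, Polynomial.coeff_X_pow]
    split
    · simp only [hb, mul_one]; exact Int.natCast_nonneg _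
    · simp
  · have hab : ∀ k ∈ Finset.range n,
        C (((Finset.univ.filter fun t => DesT t = Finset.Icc 1 k).card : ℤ)) * X ^ k
          = (C (b k) + C (b (k + 1))) * X ^ k := by
      intro k hk
      have hk' : k ≤ n - 1 := by
        have := Finset.mem_range.mp hk; omega
      rw [key k hk', Nat.cast_add, Polynomial.C_add]
    rw [Finset.sum_congr rfl hab]
    have hS1 : (∑ k ∈ Finset.range n, C (b k) * X ^ k)
        = ∑ k ∈ Finset.range n, C (b (k + 1)) * X ^ (k + 1) := by
      have e1 : (∑ k ∈ Finset.range (n + 1), C (b k) * X ^ k)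
          = (∑ k ∈ Finset.range n, C (b k) * X ^ k) + C (b n) * X ^ n :=
        Finset.sum_range_succ _ n
      have e2 : (∑ k ∈ Finset.range (n + 1), C (b k) * X ^ k)
          = (∑ k ∈ Finset.range n, C (b (k + 1)) * X ^ (k + 1)) + C (b 0) * X ^ 0 :=
        Finset.sum_range_succ' _ n
      rw [hbn] at e1; rw [hb0] at e2
      simp only [Polynomial.C_0, zero_mul, add_zero, pow_zero, mul_one] at e1 e2
      rw [← e1, e2]
    calc (∑ k ∈ Finset.range n, (C (b k) + C (b (k + 1))) * X ^ k)
        = (∑ k ∈ Finset.range n, C (b k) * X ^ k)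
          + ∑ k ∈ Finset.range n, C (b (k + 1)) * X ^ k := by
          rw [← Finset.sum_add_distrib]; congr 1; ext k; ring
      _ = (∑ k ∈ Finset.range n, C (b (k + 1)) * X ^ (k + 1))
          + ∑ k ∈ Finset.range n, C (b (k + 1)) * X ^ k := by rw [hS1]
      _ = (1 + X) * ∑ k ∈ Finset.range n, C (b (k + 1)) * X ^ k := by
          rw [Finset.mul_sum]
          rw [← Finset.sum_add_distrib]
          congr 1; ext k; ring
end
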